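/- For all nonnegative integers n and m, the following identity holds in ℚ(q): Σ_{k=0}^{⌊n/3⌋} (−1)^k · q^{3·C(k,2)} · [m+n−3k choose m]_q · [m+1 choose k]_{q^3} = Σ_{k=0}^{n} cos((2k−n)π/3) · q^{C(n−k,2)+C(k,2)} · [m+1 choose n−k]_q · [m+1 choose k]_q. -/

import Mathlib

/-- The Gaussian (q-)binomial coefficient `[a choose b]` with parameter `x`,
`∏_{j=1}^{b} (1 - x^{a-b+j})/(1 - x^j)`, an element of `ℚ(q)` when `x = q`;
it is zero when `b > a`. -/
noncomputable def qbinom (x : RatFunc ℚ) (a b : ℕ) : RatFunc ℚ :=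
  if b ≤ a then ∏ j ∈ Finset.range b, (1 - x ^ (a - b + j + 1)) / (1 - x ^ (j + 1)) else 0

/-- The indeterminate `q` of the field of rational functions `ℚ(q)`. -/
noncomputable def q : RatFunc ℚ := RatFunc.X

/-!
Both sides are the coefficient of `t^n` in `P(t) = ∏_{j=0}^{m} (1 + q^j t + q^{2j} t^2)`.
Multiplying by `∏_{j=0}^{m} (1 - q^j t)`, the inverse of `∑_n [m+n choose m]_q t^n`, turns `P`
into `∏_{j=0}^{m} (1 - q^{3j} t^3)`, which the `q`-binomial theorem in base `q^3` expands; this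
gives the left-hand side. Adjoining `ω` with `ω^2 + ω + 1 = 0`, each factor of `P` splits as
`(1 - ω q^j t) (1 - ω^2 q^j t)`, so the `q`-binomial theorem gives the coefficient as
`∑_k (-ω)^k (-ω^2)^(n-k) e_k e_(n-k)` with `e_k = q^C(k,2) [m+1 choose k]_q`; averaging this sum
with its reflection `k ↦ n - k` replaces the weights by `cos ((2k - n) π / 3)`.
-/

open Finset Polynomial

section QBinomial

noncomputable def qFactorial (x : RatFunc ℚ) (n : ℕ) : RatFunc ℚ :=
  ∏ j ∈ range n, (1 - x ^ (j + 1))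

lemma qFactorial_zero (x : RatFunc ℚ) : qFactorial x 0 = 1 :=
  prod_range_zero _

lemma qFactorial_succ (x : RatFunc ℚ) (n : ℕ) :
    qFactorial x (n + 1) = qFactorial x n * (1 - x ^ (n + 1)) :=
  prod_range_succ _ _

lemma qbinom_zero_right (x : RatFunc ℚ) (a : ℕ) : qbinom x a 0 = 1 := by
  simp [qbinom]

lemma qbinom_of_lt (x : RatFunc ℚ) {a b : ℕ} (h : a < b) : qbinom x a b = 0 := by
  simp [qbinom, h]

variable {x : RatFunc ℚ} (hx : ∀ j, 0 < j → x ^ j ≠ 1)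
include hx

lemma one_sub_pow_ne_zero {j : ℕ} (hj : 0 < j) : 1 - x ^ j ≠ 0 :=
  sub_ne_zero.2 (hx j hj).symm

lemma qFactorial_ne_zero (n : ℕ) : qFactorial x n ≠ 0 :=
  prod_ne_zero_iff.2 fun j _ ↦ one_sub_pow_ne_zero hx j.succ_pos

lemma qbinom_eq_qFactorial_div {a b : ℕ} (h : b ≤ a) :
    qbinom x a b = qFactorial x a / (qFactorial x b * qFactorial x (a - b)) := by
  have hsplit :
      qFactorial x a = qFactorial x (a - b) * ∏ j ∈ range b, (1 - x ^ (a - b + j + 1)) := by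
    rw [qFactorial, ← Nat.sub_add_cancel h, prod_range_add, Nat.add_sub_cancel]
    rfl
  rw [qbinom, if_pos h, prod_div_distrib, hsplit, ← qFactorial]
  have := qFactorial_ne_zero hx (a - b)
  field_simp

lemma qbinom_self (a : ℕ) : qbinom x a a = 1 := by
  rw [qbinom_eq_qFactorial_div hx le_rfl, Nat.sub_self, qFactorial_zero, mul_one,
    div_self (qFactorial_ne_zero hx a)]

lemma qbinom_succ_succ (a b : ℕ) :
    qbinom x (a + 1) (b + 1) = qbinom x a b + x ^ (b + 1) * qbinom x a (b + 1) := by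
  rcases lt_trichotomy a b with hab | rfl | hab
  · simp [qbinom_of_lt x hab, qbinom_of_lt x (Nat.succ_lt_succ hab),
      qbinom_of_lt x (hab.trans b.lt_succ_self)]
  · simp [qbinom_self hx, qbinom_of_lt x a.lt_succ_self]
  obtain ⟨c, rfl⟩ := Nat.exists_eq_add_of_lt hab
  rw [qbinom_eq_qFactorial_div hx (by omega), qbinom_eq_qFactorial_div hx (by omega),
    qbinom_eq_qFactorial_div hx (by omega), show b + c + 1 + 1 - (b + 1) = c + 1 by omega,
    show b + c + 1 - b = c + 1 by omega, show b + c + 1 - (b + 1) = c by omega,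
    qFactorial_succ x (b + c + 1), qFactorial_succ x b, qFactorial_succ x c]
  have := qFactorial_ne_zero hx
  have := one_sub_pow_ne_zero hx (j := b + 1) (by omega)
  have := one_sub_pow_ne_zero hx (j := c + 1) (by omega)
  field_simp
  ring

end QBinomial

lemma q_pow_ne_one (j : ℕ) (hj : 0 < j) : q ^ j ≠ 1 := by
  intro h
  have h' : algebraMap ℚ[X] (RatFunc ℚ) (X ^ j) = algebraMap ℚ[X] (RatFunc ℚ) 1 := by
    simpa [q, RatFunc.algebraMap_X] using h
  simpa [hj.ne'] using congrArg natDegree (RatFunc.algebraMap_injective ℚ h')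

lemma sum_range_ite_dvd {M : Type*} [AddCommMonoid M] {p : ℕ} (hp : 0 < p) (n : ℕ)
    (f : ℕ → M) :
    ∑ i ∈ range (n + 1), (if p ∣ i then f i else 0) =
      ∑ k ∈ range (n / p + 1), f (p * k) := by
  rw [← sum_filter]
  refine (sum_nbij' (p * ·) (· / p) ?_ ?_ ?_ ?_ fun _ _ ↦ rfl).symm <;>
    simp only [mem_filter, mem_range, Nat.lt_succ_iff]
  · intro k hk
    exact ⟨mul_comm k p ▸ Nat.mul_le_of_le_div p k n hk, dvd_mul_right p k⟩
  · rintro i ⟨hi, -⟩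
    exact Nat.div_le_div_right hi
  · intro k _
    exact Nat.mul_div_cancel_left k hp
  · rintro i ⟨-, hi⟩
    exact Nat.mul_div_cancel' hi

lemma coeff_coe_expand_mul {R : Type*} [CommRing R] {p : ℕ} (hp : 0 < p) (f : R[X])
    (g : PowerSeries R) (n : ℕ) :
    PowerSeries.coeff n ((expand R p f : PowerSeries R) * g) =
      ∑ k ∈ range (n / p + 1), f.coeff k * PowerSeries.coeff (n - p * k) g := by
  rw [PowerSeries.coeff_mul, Nat.sum_antidiagonal_eq_sum_range_succ_mk]
  simp only [Polynomial.coeff_coe, coeff_expand hp, ite_mul, zero_mul]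
  rw [sum_range_ite_dvd hp n fun i ↦ f.coeff (i / p) * PowerSeries.coeff (n - i) g]
  simp [hp.ne']

lemma sum_range_mul_eq_of_add_reflect {F : Type*} [Field F] [NeZero (2 : F)] {n : ℕ}
    {u v s : ℕ → F} (hs : ∀ k ≤ n, s (n - k) = s k)
    (huv : ∀ k ≤ n, u k + u (n - k) = 2 * v k) :
    ∑ k ∈ range (n + 1), u k * s k = ∑ k ∈ range (n + 1), v k * s k := by
  refine mul_left_cancel₀ (two_ne_zero (α := F)) ?_
  calc 2 * ∑ k ∈ range (n + 1), u k * s k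
      = ∑ k ∈ range (n + 1), u k * s k + ∑ k ∈ range (n + 1), u (n - k) * s (n - k) := by
        rw [two_mul, ← sum_range_reflect]
        simp
    _ = 2 * ∑ k ∈ range (n + 1), v k * s k := by
        rw [← sum_add_distrib, mul_sum]
        refine sum_congr rfl fun k hk ↦ ?_
        have hk : k ≤ n := Nat.lt_succ_iff.1 (mem_range.1 hk)
        rw [hs k hk, ← add_mul, huv k hk, mul_assoc]

lemma coeff_one_add_C_mul_X_mul_succ {R : Type*} [CommRing R] (a : R) (p : R[X]) (k : ℕ) :
    ((1 + C a * X) * p).coeff (k + 1) = p.coeff (k + 1) + a * p.coeff k := by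
  rw [add_mul, one_mul, coeff_add, mul_assoc, coeff_C_mul, coeff_X_mul]

lemma Real.cos_int_mul_pi_div_three (z : ℤ) :
    Real.cos (z * Real.pi / 3) = (-1) ^ z * if 3 ∣ z then 1 else -1 / 2 := by
  obtain ⟨r, a, hr0, hr2, rfl⟩ : ∃ r a : ℤ, 0 ≤ r ∧ r ≤ 2 ∧ z = r + 3 * a :=
    ⟨z % 3, z / 3, by omega, by omega, (Int.emod_add_mul_ediv z 3).symm⟩
  have hcos :
      Real.cos ((r + 3 * a : ℤ) * Real.pi / 3) = (-1) ^ a * Real.cos (r * Real.pi / 3) := by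
    rw [← Real.cos_add_int_mul_pi]; push_cast; ring_nf
  rw [hcos, zpow_add₀ (by norm_num), zpow_mul, show ((-1 : ℝ) ^ (3 : ℤ)) = -1 by norm_num]
  interval_cases r
  · simp
  · rw [if_neg (by omega)]
    norm_num [Real.cos_pi_div_three]
  · rw [if_neg (by omega),
      show ((2 : ℤ) : ℝ) * Real.pi / 3 = Real.pi - Real.pi / 3 by push_cast; ring,
      Real.cos_pi_sub, Real.cos_pi_div_three]
    norm_num

lemma eq_neg_one_pow_mul_of_eq_cos {c : ℤ → ℚ}
    (hc : ∀ z : ℤ, (c z : ℝ) = Real.cos (z * Real.pi / 3)) (n k : ℕ) :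
    c (2 * (k : ℤ) - n) = (-1) ^ n * if 3 ∣ n + k then 1 else -1 / 2 := by
  have hpar : (-1 : ℝ) ^ (2 * k - n : ℤ) = (-1) ^ n := by
    rw [zpow_sub₀ (by norm_num), zpow_mul, zpow_natCast, zpow_natCast]
    simp [← inv_pow]
  have hdvd : (3 : ℤ) ∣ 2 * k - n ↔ 3 ∣ n + k := by omega
  have h := hc (2 * k - n)
  rw [Real.cos_int_mul_pi_div_three, hpar, if_congr hdvd rfl rfl] at h
  split_ifs at h ⊢ <;> exact_mod_cast h

lemma neg_pow_mul_neg_sq_pow_add_swap {R : Type*} [CommRing R] {ω : R} (hω : ω ^ 2 + ω + 1 = 0)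
    {n k : ℕ} (hk : k ≤ n) :
    (-ω) ^ k * (-ω ^ 2) ^ (n - k) + (-ω) ^ (n - k) * (-ω ^ 2) ^ k =
      (-1) ^ n * if 3 ∣ n + k then 2 else -1 := by
  have hω3 : ω ^ 3 = 1 := by linear_combination (ω - 1) * hω
  have hmod (a : ℕ) : ω ^ a = ω ^ (a % 3) := by
    conv_lhs => rw [← Nat.mod_add_div a 3, pow_add, pow_mul, hω3, one_pow, mul_one]
  have e1 : (-ω) ^ k * (-ω ^ 2) ^ (n - k) = (-1) ^ n * ω ^ (2 * n - k) := by
    rw [neg_pow, neg_pow (ω ^ 2), ← pow_mul, mul_mul_mul_comm, ← pow_add, ← pow_add]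
    congr 2 <;> omega
  have e2 : (-ω) ^ (n - k) * (-ω ^ 2) ^ k = (-1) ^ n * ω ^ (n + k) := by
    rw [neg_pow, neg_pow (ω ^ 2), ← pow_mul, mul_mul_mul_comm, ← pow_add, ← pow_add]
    congr 2 <;> omega
  rw [e1, e2, ← mul_add, hmod (2 * n - k), hmod (n + k)]
  simp only [Nat.dvd_iff_mod_eq_zero]
  have : (n + k) % 3 = 0 ∧ (2 * n - k) % 3 = 0 ∨ (n + k) % 3 = 1 ∧ (2 * n - k) % 3 = 2 ∨
      (n + k) % 3 = 2 ∧ (2 * n - k) % 3 = 1 := by omega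
  rcases this with ⟨h1, h2⟩ | ⟨h1, h2⟩ | ⟨h1, h2⟩ <;> simp only [h1, h2] <;> norm_num
  all_goals linear_combination (-1) ^ n * hω

section GeneratingFunctions

variable {L : Type*} [CommRing L] (φ : RatFunc ℚ →+* L)

noncomputable def qProd (x : RatFunc ℚ) (a : L) (N : ℕ) : L[X] :=
  ∏ j ∈ range N, (1 + C (a * φ x ^ j) * X)

lemma qProd_succ (x : RatFunc ℚ) (a : L) (N : ℕ) :
    qProd φ x a (N + 1) = (1 + C a * X) * qProd φ x (a * φ x) N := by
  rw [qProd, prod_range_succ', mul_comm, qProd]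
  simp only [pow_zero, mul_one, pow_succ, mul_assoc, mul_comm (φ x)]

lemma qProd_neg_one_mul_qProd_mul_qProd {ω : L} (hω : ω ^ 2 + ω + 1 = 0) (x : RatFunc ℚ)
    (N : ℕ) :
    qProd φ x (-1) N * (qProd φ x (-ω) N * qProd φ x (-ω ^ 2) N) =
      expand L 3 (qProd φ (x ^ 3) (-1) N) := by
  simp only [qProd, ← prod_mul_distrib, map_prod]
  refine prod_congr rfl fun j _ ↦ ?_
  simp only [map_add, map_one, map_mul, map_neg, map_pow, expand_C, expand_X]
  have hCω : C ω ^ 2 + C ω + 1 = (0 : L[X]) := by simpa using congrArg C hω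
  set y := C (φ x) ^ j * X
  linear_combination (-y + C ω * y ^ 2 - (C ω - 1) * y ^ 3) * hCω

noncomputable def qbinomSeries (x : RatFunc ℚ) (m : ℕ) : PowerSeries L :=
  PowerSeries.mk fun n ↦ φ (qbinom x (m + n) m)

variable {x : RatFunc ℚ} (hx : ∀ j, 0 < j → x ^ j ≠ 1)
include hx

/-- The `q`-binomial theorem. -/
theorem coeff_qProd (a : L) (N k : ℕ) :
    (qProd φ x a N).coeff k = a ^ k * φ (x ^ k.choose 2 * qbinom x N k) := by
  induction N generalizing a k with
  | zero =>
    rcases k with _ | k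
    · simp [qProd, qbinom_zero_right]
    · simp [qProd, qbinom_of_lt x k.succ_pos, coeff_one]
  | succ N ih =>
    rcases k with _ | k
    · simp [qProd_succ, ih, qbinom_zero_right]
    · rw [qProd_succ, coeff_one_add_C_mul_X_mul_succ, ih, ih, qbinom_succ_succ hx,
        Nat.choose_succ_succ', Nat.choose_one_right]
      simp only [map_add, map_mul, map_pow]
      ring

lemma one_sub_C_mul_X_mul_qbinomSeries (m : ℕ) :
    (1 - PowerSeries.C (φ x ^ (m + 1)) * PowerSeries.X) * qbinomSeries φ x (m + 1) =
      qbinomSeries φ x m := by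
  ext (_ | n)
  · simp [qbinomSeries, qbinom_self hx]
  · rw [sub_mul, one_mul, map_sub, mul_assoc, PowerSeries.coeff_C_mul,
      PowerSeries.coeff_succ_X_mul]
    simp only [qbinomSeries, PowerSeries.coeff_mk]
    rw [show m + 1 + (n + 1) = m + n + 1 + 1 by omega, qbinom_succ_succ hx,
      show m + 1 + n = m + n + 1 by omega, show m + (n + 1) = m + n + 1 by omega]
    simp

lemma qProd_neg_one_mul_qbinomSeries (m : ℕ) :
    (qProd φ x (-1) (m + 1) : PowerSeries L) * qbinomSeries φ x m = 1 := by
  induction m with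
  | zero =>
    ext (_ | n)
    · simp [qProd, qbinomSeries, qbinom_zero_right]
    · simp [qProd, qbinomSeries, qbinom_zero_right, add_mul, PowerSeries.coeff_succ_X_mul]
  | succ m ih =>
    rw [qProd, prod_range_succ, ← qProd, Polynomial.coe_mul, mul_assoc, ← ih]
    congr 1
    convert one_sub_C_mul_X_mul_qbinomSeries φ hx m using 2
    simp [sub_eq_add_neg]

lemma coeff_expand_qProd_mul_qbinomSeries (m n : ℕ) :
    PowerSeries.coeff n
        ((expand L 3 (qProd φ (x ^ 3) (-1) (m + 1)) : PowerSeries L) * qbinomSeries φ x m) =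
      φ (∑ k ∈ range (n / 3 + 1), (-1) ^ k * x ^ (3 * k.choose 2) *
        qbinom x (m + n - 3 * k) m * qbinom (x ^ 3) (m + 1) k) := by
  have hx3 (j : ℕ) (hj : 0 < j) : (x ^ 3) ^ j ≠ 1 := by
    rw [← pow_mul]
    exact hx _ (by omega)
  rw [coeff_coe_expand_mul three_pos, map_sum]
  refine sum_congr rfl fun k hk ↦ ?_
  have hk : 3 * k ≤ n := by have := mem_range.1 hk; omega
  rw [coeff_qProd φ hx3, qbinomSeries, PowerSeries.coeff_mk, ← Nat.add_sub_assoc hk]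
  simp only [map_mul, map_pow, map_neg, map_one, pow_mul]
  ring

lemma coe_qProd_mul_qProd_eq_expand_mul_qbinomSeries {ω : L} (hω : ω ^ 2 + ω + 1 = 0)
    (m : ℕ) :
    ((qProd φ x (-ω) (m + 1) * qProd φ x (-ω ^ 2) (m + 1) : L[X]) : PowerSeries L) =
      (expand L 3 (qProd φ (x ^ 3) (-1) (m + 1)) : PowerSeries L) * qbinomSeries φ x m := by
  rw [← qProd_neg_one_mul_qProd_mul_qProd φ hω x (m + 1)]
  simp only [Polynomial.coe_mul]
  linear_combination
    -((qProd φ x (-ω) (m + 1) : PowerSeries L) * qProd φ x (-ω ^ 2) (m + 1)) *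
      qProd_neg_one_mul_qbinomSeries φ hx m

end GeneratingFunctions

lemma coeff_qProd_mul_qProd_eq_sum_cos {L : Type*} [Field L] [CharZero L] (φ : RatFunc ℚ →+* L)
    {x : RatFunc ℚ} (hx : ∀ j, 0 < j → x ^ j ≠ 1) {ω : L} (hω : ω ^ 2 + ω + 1 = 0)
    {c : ℤ → ℚ} (hc : ∀ z : ℤ, (c z : ℝ) = Real.cos (z * Real.pi / 3)) (N n : ℕ) :
    (qProd φ x (-ω) N * qProd φ x (-ω ^ 2) N).coeff n =
      φ (∑ k ∈ range (n + 1), algebraMap ℚ (RatFunc ℚ) (c (2 * (k : ℤ) - n)) *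
        x ^ ((n - k).choose 2 + k.choose 2) * qbinom x N (n - k) * qbinom x N k) := by
  set s : ℕ → L := fun k ↦
    φ (x ^ k.choose 2 * qbinom x N k) * φ (x ^ (n - k).choose 2 * qbinom x N (n - k))
  rw [coeff_mul, Nat.sum_antidiagonal_eq_sum_range_succ_mk, map_sum]
  simp only [coeff_qProd φ hx]
  calc _ = ∑ k ∈ range (n + 1), (-ω) ^ k * (-ω ^ 2) ^ (n - k) * s k :=
        sum_congr rfl fun k _ ↦ by ring
    _ = ∑ k ∈ range (n + 1), φ (algebraMap ℚ _ (c (2 * (k : ℤ) - n))) * s k := by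
        refine sum_range_mul_eq_of_add_reflect (fun k hk ↦ ?_) (fun k hk ↦ ?_)
        · simp only [s, Nat.sub_sub_self hk, mul_comm]
        · rw [Nat.sub_sub_self hk, neg_pow_mul_neg_sq_pow_add_swap hω hk,
            eq_neg_one_pow_mul_of_eq_cos hc]
          split_ifs <;> simp [map_ofNat] <;> ring
    _ = _ := sum_congr rfl fun k _ ↦ by simp only [s, map_mul, map_pow, pow_add]; ring

theorem stmt_15 (n m : ℕ) (c : ℤ → ℚ)
    (hc : ∀ z : ℤ, (c z : ℝ) = Real.cos (z * Real.pi / 3)) :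
    ∑ k ∈ Finset.range (n / 3 + 1),
      (-1 : RatFunc ℚ) ^ k * q ^ (3 * Nat.choose k 2) * qbinom q (m + n - 3 * k) m *
        qbinom (q ^ 3) (m + 1) k
    = ∑ k ∈ Finset.range (n + 1),
        algebraMap ℚ (RatFunc ℚ) (c (2 * (k : ℤ) - n)) *
          q ^ (Nat.choose (n - k) 2 + Nat.choose k 2) *
          qbinom q (m + 1) (n - k) * qbinom q (m + 1) k := by
  let φ := algebraMap (RatFunc ℚ) (CyclotomicField 3 (RatFunc ℚ))
  obtain ⟨ω, hω⟩ : ∃ ω : CyclotomicField 3 (RatFunc ℚ), ω ^ 2 + ω + 1 = 0 := by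
    have hζ := (IsCyclotomicExtension.zeta_spec 3 (RatFunc ℚ)
      (CyclotomicField 3 (RatFunc ℚ))).geom_sum_eq_zero (by norm_num)
    rw [sum_range_succ, sum_range_succ, sum_range_one] at hζ
    exact ⟨_, by linear_combination hζ⟩
  apply φ.injective
  rw [← coeff_expand_qProd_mul_qbinomSeries φ q_pow_ne_one,
    ← coe_qProd_mul_qProd_eq_expand_mul_qbinomSeries φ q_pow_ne_one hω, Polynomial.coeff_coe,
    coeff_qProd_mul_qProd_eq_sum_cos φ q_pow_ne_one hω hc]
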